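/- Let K/F be cyclic Galois of degree n with Galois group ⟨σ⟩, and f(t) = t^m − Σ a_i t^i ∈ K[t;σ] not right invariant, with nonzero coefficient indices λ₁,…,λ_r. If d = gcd(m−λ₁, …, m−λ_r, n), then Nuc(S_f) = Fix(σ^d), and hence [Nuc(S_f) : F] = gcd(n, d). In particular Nuc(S_f) = F if and only if d = 1. -/

import Mathlib

open Polynomial

/-- Skew (twisted) multiplication on polynomials over `K`, representing the
multiplication of the twisted polynomial ring `K[t;σ]` with `t·a = σ(a)·t`:
`(a t^i)·(b t^j) = a σ^i(b) t^{i+j}`. -/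
noncomputable def sMul {K : Type} [Field K] (σ : K ≃+* K) (p q : K[X]) : K[X] :=
  p.sum fun i a => C a * (q.map ((σ ^ i : K ≃+* K) : K →+* K)) * X ^ i

/-- `f` is right invariant in `K[t;σ]`: `f·g ∈ R·f` for all `g`. -/
def RightInvariant {K : Type} [Field K] (σ : K ≃+* K) (f : K[X]) : Prop :=
  ∀ g : K[X], ∃ q : K[X], sMul σ f g = sMul σ q f

/-- Membership in the eigenring of `f`, i.e. the right nucleus of the Petit
algebra `S_f = K[t;σ]/K[t;σ]f` (for `f` not right invariant):
`{g | deg g < deg f ∧ f·g ∈ R·f}`. -/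
def InEigenring {K : Type} [Field K] (σ : K ≃+* K) (f g : K[X]) : Prop :=
  g.degree < f.degree ∧ ∃ q : K[X], sMul σ f g = sMul σ q f

/-- Remainder of right division by `f` in `K[t;σ]` (Petit multiplication in
`S_f` is `g ∘ h = (g·h) mod_r f`). -/
noncomputable def modRight {K : Type} [Field K] (σ : K ≃+* K) (f g : K[X]) : K[X] := by
  classical
  exact if h : ∃ r : K[X], r.degree < f.degree ∧ ∃ q : K[X], g = sMul σ q f + r
    then h.choose else 0

/-!
Since `f` is monic, comparing top coefficients in `f · x = q · f` forces `q` to be a constant,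
which must then be `σ^m(x)`; comparing the remaining coefficients shows that `x` lies in the
eigenring iff `σ^i(x) = σ^m(x)`, i.e. `σ^(m-i)(x) = x`, for every `i` with `a_i ≠ 0`. The
stabilizer of `x` is a subgroup of the cyclic group `⟨σ⟩` of order `n`, so it contains all
these powers iff it contains `σ^d`. Finally `[K : Fix(σ^d)] = ord(σ^d) = n / gcd(n, d)`, and
the tower law gives `[Fix(σ^d) : F] = gcd(n, d)`.
-/

section SkewMul

variable {K : Type} [Field K] (σ : K ≃+* K)

lemma coeff_sMul_C (p : K[X]) (x : K) (j : ℕ) :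
    (sMul σ p (C x)).coeff j = p.coeff j * (σ ^ j) x := by
  classical
  simp only [sMul, Polynomial.sum, finsetSum_coeff, Polynomial.map_C, ← C_mul, coeff_C_mul,
    coeff_X_pow, mul_ite, mul_one, mul_zero, Finset.sum_ite_eq]
  split_ifs with h
  · rfl
  · rw [notMem_support_iff.1 h, zero_mul]

lemma sMul_C_left (c : K) (f : K[X]) : sMul σ (C c) f = C c * f := by
  rw [sMul, sum_C_index (by simp)]
  ext
  simp [coeff_map]

lemma coeff_sMul_natDegree_add (q f : K[X]) :
    (sMul σ q f).coeff (q.natDegree + f.natDegree)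
      = q.leadingCoeff * (σ ^ q.natDegree) f.leadingCoeff := by
  classical
  by_cases hq : q = 0
  · simp [hq, sMul]
  rw [sMul, Polynomial.sum, finsetSum_coeff,
    Finset.sum_eq_single_of_mem _ (natDegree_mem_support_of_nonzero hq)]
  · rw [add_comm, coeff_mul_X_pow, coeff_C_mul, coeff_map]
    rfl
  · intro i hi hne
    have hlt : i < q.natDegree := (le_natDegree_of_mem_supp i hi).lt_of_ne hne
    rw [coeff_mul_X_pow', if_pos (by omega), coeff_C_mul, coeff_map,
      coeff_eq_zero_of_natDegree_lt (p := f) (by omega), map_zero, mul_zero]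

lemma eq_C_of_sMul_C_eq_sMul {f q : K[X]} {x : K} (hf : f.Monic)
    (h : sMul σ f (C x) = sMul σ q f) : q = C ((σ ^ f.natDegree) x) := by
  have hq : q.natDegree = 0 := by
    by_contra hq
    have hcoeff := congrArg (coeff · (q.natDegree + f.natDegree)) h
    have hzero : f.coeff (q.natDegree + f.natDegree) = 0 :=
      coeff_eq_zero_of_natDegree_lt (by omega)
    rw [coeff_sMul_C, hzero, zero_mul, coeff_sMul_natDegree_add, hf.leadingCoeff, map_one,
      mul_one] at hcoeff
    exact hq (by rw [leadingCoeff_eq_zero.1 hcoeff.symm, natDegree_zero])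
  rw [eq_C_of_natDegree_eq_zero hq] at h ⊢
  rw [sMul_C_left] at h
  simpa [coeff_sMul_C, hf.coeff_natDegree] using (congrArg (coeff · f.natDegree) h).symm

lemma pow_sub_apply_eq_self_iff {j m : ℕ} (hj : j ≤ m) (x : K) :
    (σ ^ (m - j)) x = x ↔ (σ ^ j) x = (σ ^ m) x := by
  have hsplit : (σ ^ m) x = (σ ^ j) ((σ ^ (m - j)) x) := by
    rw [← RingAut.mul_apply, ← pow_add, Nat.add_sub_cancel' hj]
  rw [hsplit, (σ ^ j).injective.eq_iff, eq_comm]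

theorem inEigenring_C_iff {f : K[X]} (hf : f.Monic) (hpos : 0 < f.natDegree) (x : K) :
    InEigenring σ f (C x) ↔ ∀ j ∈ f.support, (σ ^ (f.natDegree - j)) x = x := by
  have hdeg : (C x).degree < f.degree :=
    degree_C_le.trans_lt (by rw [degree_eq_natDegree hf.ne_zero]; exact_mod_cast hpos)
  have hcoeff : ∀ j ∈ f.support, (σ ^ (f.natDegree - j)) x = x ↔
      f.coeff j * (σ ^ j) x = (σ ^ f.natDegree) x * f.coeff j := by
    intro j hj
    rw [pow_sub_apply_eq_self_iff σ (le_natDegree_of_mem_supp j hj), mul_comm _ (f.coeff j),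
      mul_right_inj' (mem_support_iff.1 hj)]
  simp only [InEigenring, hdeg, true_and]
  constructor
  · rintro ⟨q, hq⟩ j hj
    rw [hcoeff j hj]
    rw [eq_C_of_sMul_C_eq_sMul σ hf hq, sMul_C_left] at hq
    simpa only [coeff_sMul_C, coeff_C_mul] using congrArg (coeff · j) hq
  · intro h
    refine ⟨C ((σ ^ f.natDegree) x), ?_⟩
    ext j
    rw [sMul_C_left, coeff_sMul_C, coeff_C_mul]
    by_cases hj : j ∈ f.support
    · exact (hcoeff j hj).1 (h j hj)
    · simp [notMem_support_iff.1 hj]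

end SkewMul

section SparsePolynomial

variable {R : Type*} [Ring R] (a : ℕ → R) (m : ℕ)

lemma degree_sum_range_C_mul_X_pow_lt :
    (∑ i ∈ Finset.range m, C (a i) * X ^ i).degree < (m : WithBot ℕ) := by
  simpa only [Fin.sum_univ_eq_sum_range (fun i => C (a i) * X ^ i)] using
    degree_sum_fin_lt fun i : Fin m => a i

lemma monic_X_pow_sub_sum_range : (X ^ m - ∑ i ∈ Finset.range m, C (a i) * X ^ i).Monic :=
  monic_X_pow_sub (degree_sum_range_C_mul_X_pow_lt a m)

lemma natDegree_X_pow_sub_sum_range [Nontrivial R] :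
    (X ^ m - ∑ i ∈ Finset.range m, C (a i) * X ^ i).natDegree = m :=
  natDegree_eq_of_degree_eq_some <| by
    rw [degree_sub_eq_left_of_degree_lt (by simpa using degree_sum_range_C_mul_X_pow_lt a m),
      degree_X_pow]

lemma support_X_pow_sub_sum_range [Nontrivial R] [DecidableEq R] :
    (X ^ m - ∑ i ∈ Finset.range m, C (a i) * X ^ i).support
      = insert m ((Finset.range m).filter fun i => a i ≠ 0) := by
  ext j
  simp only [mem_support_iff, coeff_sub, coeff_X_pow, finsetSum_coeff, coeff_C_mul, mul_ite,
    mul_one, mul_zero, Finset.sum_ite_eq, Finset.mem_insert, Finset.mem_filter, Finset.mem_range]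
  rcases lt_trichotomy j m with h | rfl | h
  · simp [h, h.ne]
  · simp
  · simp [h.ne', h.not_gt]

end SparsePolynomial

section CyclicAction

variable {G : Type*} [Group G]

lemma pow_gcd_mem {H : Subgroup G} {g : G} {a b : ℕ} (ha : g ^ a ∈ H) (hb : g ^ b ∈ H) :
    g ^ Nat.gcd a b ∈ H := by
  have hbezout : g ^ (Nat.gcd a b : ℤ)
      = (g ^ (a : ℤ)) ^ Nat.gcdA a b * (g ^ (b : ℤ)) ^ Nat.gcdB a b := by
    rw [← zpow_mul, ← zpow_mul, ← zpow_add, ← Nat.gcd_eq_gcd_ab]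
  rw [← zpow_natCast, hbezout]
  exact mul_mem (zpow_mem (by rwa [zpow_natCast]) _) (zpow_mem (by rwa [zpow_natCast]) _)

lemma pow_finset_gcd_mem {ι : Type*} {H : Subgroup G} {g : G} (s : Finset ι) (v : ι → ℕ)
    (h : ∀ i ∈ s, g ^ v i ∈ H) : g ^ s.gcd v ∈ H := by
  induction s using Finset.cons_induction with
  | empty => simp
  | cons i s hi ih =>
    rw [Finset.forall_mem_cons] at h
    rw [Finset.gcd_cons]
    exact pow_gcd_mem h.1 (ih h.2)

theorem pow_gcd_finset_gcd_smul_eq_self_iff {α ι : Type*} [MulAction G α] {g : G} {n : ℕ}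
    (hn : g ^ n = 1) (s : Finset ι) (v : ι → ℕ) (x : α) :
    g ^ Nat.gcd (s.gcd v) n • x = x ↔ ∀ i ∈ s, g ^ v i • x = x := by
  simp only [← MulAction.mem_stabilizer_iff]
  refine ⟨fun h i hi => ?_, fun h => pow_gcd_mem (pow_finset_gcd_mem s v h) (by simp [hn])⟩
  obtain ⟨k, hk⟩ := (Nat.gcd_dvd_left _ n).trans (Finset.gcd_dvd (f := v) hi)
  rw [hk, pow_mul]
  exact pow_mem h k

end CyclicAction

section FixedField

open IntermediateField

variable {F K : Type*} [Field F] [Field K] [Algebra F K]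

lemma mem_fixedField_zpowers_iff (τ : K ≃ₐ[F] K) (x : K) :
    x ∈ fixedField (Subgroup.zpowers τ) ↔ τ x = x := by
  rw [mem_fixedField_iff]
  refine ⟨fun h => h τ (Subgroup.mem_zpowers τ), fun h ρ hρ => ?_⟩
  have hτ : τ ∈ MulAction.stabilizer (K ≃ₐ[F] K) x := h
  exact Subgroup.zpowers_le.2 hτ hρ

theorem finrank_fixedField_zpowers_pow [FiniteDimensional F K] {σ : K ≃ₐ[F] K}
    (hσ : orderOf σ = Module.finrank F K) (d : ℕ) :
    Module.finrank F (fixedField (Subgroup.zpowers (σ ^ d)))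
      = Nat.gcd (Module.finrank F K) d := by
  set n := Module.finrank F K
  have hgcd : 0 < Nat.gcd n d := Nat.gcd_pos_of_pos_left d Module.finrank_pos
  have htop : Module.finrank (fixedField (Subgroup.zpowers (σ ^ d))) K = n / Nat.gcd n d := by
    rw [finrank_fixedField_eq_card, Nat.card_zpowers, orderOf_pow, hσ]
  have htower := Module.finrank_mul_finrank F (fixedField (Subgroup.zpowers (σ ^ d))) K
  rw [htop] at htower
  refine Nat.eq_of_mul_eq_mul_right (Nat.div_pos (Nat.gcd_le_left d Module.finrank_pos) hgcd) ?_
  rw [htower, Nat.mul_div_cancel' (Nat.gcd_dvd_left n d)]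

end FixedField

theorem nucleus_eq_fix_gcd_general (F K : Type) [Field F] [Field K] [Algebra F K]
    [IsGalois F K] [FiniteDimensional F K] [DecidableEq K]
    (n : ℕ) (hn : Module.finrank F K = n)
    (σ : K ≃ₐ[F] K) (hgen : ∀ τ : K ≃ₐ[F] K, τ ∈ Subgroup.zpowers σ)
    (σr : K ≃+* K) (hσr : ∀ x, σr x = σ x)
    (m : ℕ) (hm : 2 ≤ m) (a : ℕ → K) (f : K[X])
    (hf : f = X ^ m - ∑ i ∈ Finset.range m, C (a i) * X ^ i)
    (d : ℕ)
    (hd : d = Nat.gcd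
      (Finset.gcd ((Finset.range m).filter fun i => a i ≠ 0) fun i => m - i) n) :
    {x : K | InEigenring σr f (C x)} =
        (IntermediateField.fixedField (Subgroup.zpowers (σ ^ d)) : Set K) ∧
      Module.finrank F
        (IntermediateField.fixedField (Subgroup.zpowers (σ ^ d))) = Nat.gcd n d ∧
      ({x : K | InEigenring σr f (C x)} = ((⊥ : IntermediateField F K) : Set K) ↔
        d = 1) := by
  have horder : orderOf σ = n := by
    rw [orderOf_eq_card_of_forall_mem_zpowers hgen, IsGalois.card_aut_eq_finrank, hn]
  have hσr_pow : ∀ (k : ℕ) (x : K), (σr ^ k) x = (σ ^ k) x := by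
    have hσr_eq : σr = MulSemiringAction.toRingAut (K ≃ₐ[F] K) K σ := RingEquiv.ext hσr
    intro k x
    rw [hσr_eq, ← map_pow]
    rfl
  have hnucleus : ∀ x, InEigenring σr f (C x) ↔ (σ ^ d) x = x := by
    intro x
    rw [hf, inEigenring_C_iff σr (monic_X_pow_sub_sum_range a m)
        (by rw [natDegree_X_pow_sub_sum_range]; omega), natDegree_X_pow_sub_sum_range,
      support_X_pow_sub_sum_range, Finset.forall_mem_insert, Nat.sub_self, pow_zero]
    simp only [RingAut.one_apply, true_and, hσr_pow, ← AlgEquiv.smul_def, hd]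
    exact (pow_gcd_finset_gcd_smul_eq_self_iff (horder ▸ pow_orderOf_eq_one σ) _ _ x).symm
  have hfixed : {x : K | InEigenring σr f (C x)}
      = (IntermediateField.fixedField (Subgroup.zpowers (σ ^ d)) : Set K) := by
    ext x
    exact (hnucleus x).trans (mem_fixedField_zpowers_iff _ x).symm
  have hrank := hn ▸ finrank_fixedField_zpowers_pow (horder.trans hn.symm) d
  refine ⟨hfixed, hrank, ?_⟩
  rw [hfixed, SetLike.coe_set_eq, ← IntermediateField.finrank_eq_one_iff, hrank,
    Nat.gcd_eq_right (hd ▸ Nat.gcd_dvd_right _ _)]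

/-- Theorem 2.5: let `K/F` be cyclic Galois of degree `n` with Galois group `⟨σ⟩`,
`f(t) = t^m - Σ a_i t^i ∈ K[t;σ]` not right invariant, and
`d = gcd(m-λ₁,…,m-λ_r,n)` where `λ₁,…,λ_r` are the nonzero coefficient indices.
Then `Nuc(S_f) = Fix(σ^d)`, hence `[Nuc(S_f):F] = gcd(n,d)`; in particular
`Nuc(S_f) = F` iff `d = 1`. -/
theorem nucleus_eq_fix_gcd (F K : Type) [Field F] [Field K] [Algebra F K]
    [IsGalois F K] [FiniteDimensional F K] [DecidableEq K]
    (n : ℕ) (hn : Module.finrank F K = n)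
    (σ : K ≃ₐ[F] K) (hgen : ∀ τ : K ≃ₐ[F] K, τ ∈ Subgroup.zpowers σ)
    (σr : K ≃+* K) (hσr : ∀ x, σr x = σ x)
    (m : ℕ) (hm : 2 ≤ m) (a : ℕ → K) (f : K[X])
    (hf : f = X ^ m - ∑ i ∈ Finset.range m, C (a i) * X ^ i)
    (hri : ¬ RightInvariant σr f)
    (d : ℕ)
    (hd : d = Nat.gcd
      (Finset.gcd ((Finset.range m).filter fun i => a i ≠ 0) fun i => m - i) n) :
    {x : K | InEigenring σr f (C x)} =
        (IntermediateField.fixedField (Subgroup.zpowers (σ ^ d)) : Set K) ∧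
      Module.finrank F
        (IntermediateField.fixedField (Subgroup.zpowers (σ ^ d))) = Nat.gcd n d ∧
      ({x : K | InEigenring σr f (C x)} = ((⊥ : IntermediateField F K) : Set K) ↔
        d = 1) :=
  nucleus_eq_fix_gcd_general F K n hn σ hgen σr hσr m hm a f hf d hd
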